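/- arXiv:2001.04933 — 6 statements merged into one kernel-verified Lean document; each statement's English description precedes it below -/
import Mathlib

section
/- Let J, K ≥ 1 and N = JK. Let f_0,…,f_{K−1} : ℝ → ℝ be an admissible function family and write f(t) = (f_0(t),…,f_{K−1}(t)) ∈ ℝ^K. Let g_0,…,g_{N−1} ∈ ℝ^J be vectors in general position. Then the following are equivalent: (i) no vector value occurs more than K times among g_0,…,g_{N−1}; (ii) the set of tuples (t_0,…,t_{N−1}) ∈ ℝ^N for which the N rank-one matrices g_n f(t_n)ᵀ (equivalently, the vectors vec(g_n f(t_n)ᵀ)) fail to form a basis of ℝ^{J×K} has Lebesgue measure zero in ℝ^N. -/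
/-!
The bad tuples are the zeros of `t ↦ D (f(t₀), …, f(t_{N-1}))`, where `D`, the determinant of
the matrices `gₙ wₙᵀ` in a fixed basis of `ℝ^{J×K}`, is a multilinear form in
`w₀, …, w_{N-1} ∈ ℝ^K`. If `D ≠ 0`, this zero set is null by induction on `N` and Fubini: with all
times but `t₀` fixed, `D` is a linear form `c ⬝ᵥ f(t₀)`, nonzero for almost all values of the
other times, and such a form vanishes only on a null set of `t₀`.
When no value occurs more than `K` times, sorting the `gₙ` and dealing them round-robin into `K`
columns gives each column `J` distinct values; with `wₙ = e_k` for the measurements in column `k`,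
general position makes the matrices a basis, so `D ≠ 0`. Conversely, `K + 1` measurements with the
same `gₙ = a` lie in the `K`-dimensional space `{a wᵀ}`, so the matrices are never a basis.
-/

open MeasureTheory Matrix

namespace MultilinearMap

theorem exists_curryLeft_ne_zero {R E M₂ : Type*} [CommSemiring R] [AddCommMonoid E]
    [Module R E] [AddCommMonoid M₂] [Module R M₂] {n : ℕ}
    {M : MultilinearMap R (fun _ : Fin (n + 1) => E) M₂} (hM : M ≠ 0) :
    ∃ e, M.curryLeft e ≠ 0 := by
  obtain ⟨m, hm⟩ : ∃ m, M m ≠ 0 := by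
    by_contra! h
    exact hM (ext h)
  refine ⟨m 0, fun h => hm ?_⟩
  rw [← Fin.cons_self_tail m, ← curryLeft_apply, h, _root_.zero_apply]

variable {ι α : Type*} [Fintype ι] [MeasurableSpace α]

theorem measurable_comp {n : ℕ} (M : MultilinearMap ℝ (fun _ : Fin n => ι → ℝ) ℝ)
    {F : α → ι → ℝ} (hF : Measurable F) :
    Measurable fun x : Fin n → α => M fun i => F (x i) := by
  classical
  have hexpand : ∀ v : Fin n → ι → ℝ,
      M v = ∑ r : Fin n → ι, (∏ i, v i (r i)) • M fun i => Pi.single (r i) 1 := by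
    intro v
    conv_lhs => rw [show v = fun i => ∑ k, v i k • Pi.single k 1 from
      funext fun i => pi_eq_sum_univ' (v i)]
    simp only [M.map_sum, M.map_smul_univ]
  rw [show (fun x : Fin n → α => M fun i => F (x i)) = _ from funext fun x => hexpand _]
  fun_prop

end MultilinearMap

namespace MeasureTheory.Measure

theorem ae_pi_of_ae_ae_cons {α : Type*} [MeasurableSpace α] (μ : Measure α) [SigmaFinite μ]
    {n : ℕ} {P : (Fin (n + 1) → α) → Prop} (hP : MeasurableSet {x | P x})
    (h : ∀ᵐ s ∂Measure.pi (fun _ : Fin n => μ), ∀ᵐ a ∂μ, P (Fin.cons a s)) :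
    ∀ᵐ x ∂Measure.pi (fun _ => μ), P x := by
  have hpres := (measurePreserving_piFinSuccAbove (fun _ : Fin (n + 1) => μ) 0).symm
  rw [← hpres.map_eq, ae_map_iff hpres.measurable.aemeasurable hP]
  set S := (MeasurableEquiv.piFinSuccAbove (fun _ : Fin (n + 1) => α) 0).symm ⁻¹' {x | P x}
  have hS : MeasurableSet S := hP.preimage hpres.measurable
  refine (ae_prod_iff_ae_ae hS).2 ((ae_ae_comm (p := fun a s => (a, s) ∈ S) hS).2 ?_)
  simpa [S, Fin.consEquiv] using h

end MeasureTheory.Measure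

theorem MultilinearMap.ae_apply_comp_ne_zero {ι α : Type*} [Fintype ι] [MeasurableSpace α]
    (μ : Measure α) [SigmaFinite μ] {F : α → ι → ℝ} (hF : Measurable F)
    (hnull : ∀ c : ι → ℝ, c ≠ 0 → μ {x | c ⬝ᵥ F x = 0} = 0) {n : ℕ}
    (M : MultilinearMap ℝ (fun _ : Fin n => ι → ℝ) ℝ) (hM : M ≠ 0) :
    ∀ᵐ x ∂Measure.pi fun _ => μ, M (fun i => F (x i)) ≠ 0 := by
  classical
  induction n with
  | zero =>
    refine Filter.Eventually.of_forall fun x h => hM (ext fun m => ?_)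
    rwa [Subsingleton.elim m]
  | succ n ih =>
    obtain ⟨e, he⟩ := exists_curryLeft_ne_zero hM
    refine Measure.ae_pi_of_ae_ae_cons μ
      (measurableSet_eq_fun (measurable_comp M hF) measurable_const).compl ?_
    filter_upwards [ih _ he] with s hs
    set φ := M.toLinearMap (Fin.cons 0 fun i => F (s i)) 0
    have hφ : ∀ a, φ (F a) = M (fun i => F ((Fin.cons a s : Fin (n + 1) → α) i)) := fun a => by
      rw [toLinearMap_apply, Fin.update_cons_zero]
      congr 1
      funext i
      cases i using Fin.cases <;> rfl
    have hc : (dotProductEquiv ℝ ι).symm φ ≠ 0 := by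
      refine (LinearEquiv.map_ne_zero_iff _).2 fun hφ₀ => hs ?_
      rw [curryLeft_apply, ← Fin.update_cons_zero 0, ← toLinearMap_apply]
      exact LinearMap.congr_fun hφ₀ e
    rw [ae_iff]
    refine measure_mono_null (fun a ha => ?_) (hnull _ hc)
    rw [Set.mem_ofPred_eq, not_not] at ha
    rw [Set.mem_ofPred_eq, ← dotProductEquiv_apply_apply, LinearEquiv.apply_symm_apply, hφ, ha]

theorem ae_linearIndependent_and_span_eq_top {ι α V : Type*} [Fintype ι] [MeasurableSpace α]
    [AddCommGroup V] [Module ℝ V] (μ : Measure α) [SigmaFinite μ] {F : α → ι → ℝ}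
    (hF : Measurable F) (hnull : ∀ c : ι → ℝ, c ≠ 0 → μ {x | c ⬝ᵥ F x = 0} = 0)
    {n : ℕ} (L : Fin n → (ι → ℝ) →ₗ[ℝ] V) {w₀ : Fin n → ι → ℝ}
    (hli₀ : LinearIndependent ℝ fun i => L i (w₀ i))
    (hspan₀ : Submodule.span ℝ (Set.range fun i => L i (w₀ i)) = ⊤) :
    ∀ᵐ x ∂Measure.pi fun _ => μ, LinearIndependent ℝ (fun i => L i (F (x i))) ∧
      Submodule.span ℝ (Set.range fun i => L i (F (x i))) = ⊤ := by
  set b := Module.Basis.mk hli₀ hspan₀.ge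
  set D := b.det.toMultilinearMap.compLinearMap L
  have hD : D ≠ 0 := fun hD₀ => by
    have hDw₀ : D w₀ = 1 := by
      change b.det (fun i => L i (w₀ i)) = 1
      rw [← Module.Basis.coe_mk hli₀ hspan₀.ge, b.det_self]
    simp [hD₀] at hDw₀
  filter_upwards [MultilinearMap.ae_apply_comp_ne_zero μ hF hnull D hD] with x hx
  exact b.is_basis_iff_det.2 (isUnit_iff_ne_zero.2 hx)

theorem Monotone.apply_ne_of_add_le {β : Type*} [PartialOrder β] {N K : ℕ} {h : Fin N → β}
    (hh : Monotone h) (hfiber : ∀ b, {n | h n = b}.ncard ≤ K) {p q : Fin N}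
    (hpq : (p : ℕ) + K ≤ q) : h p ≠ h q := by
  intro hpq_eq
  have hsub : Set.Icc p q ⊆ {n | h n = h p} := fun r hr =>
    le_antisymm (hpq_eq ▸ hh hr.2) (hh hr.1)
  have hcard : (Set.Icc p q).ncard = q + 1 - p := by
    rw [← Finset.coe_Icc, Set.ncard_coe_finset, Fin.card_Icc]
  have := (Set.ncard_le_ncard hsub).trans (hfiber (h p))
  omega

theorem exists_equiv_injective_column {β : Type*} [LinearOrder β] {J K : ℕ}
    (g : Fin (J * K) → β) (hg : ∀ b, {n | g n = b}.ncard ≤ K) :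
    ∃ τ : Fin J × Fin K ≃ Fin (J * K), ∀ k, Function.Injective fun i => g (τ (i, k)) := by
  set σ := Tuple.sort g
  have hfiber : ∀ b, {p | (g ∘ σ) p = b}.ncard ≤ K := fun b =>
    (Set.ncard_preimage_of_injective_subset_range σ.injective (by simp)).trans_le (hg b)
  refine ⟨finProdFinEquiv.trans σ, fun k => Function.Injective.of_lt_imp_ne fun i₁ i₂ hi => ?_⟩
  refine (Tuple.monotone_sort g).apply_ne_of_add_le hfiber ?_
  simp only [finProdFinEquiv_apply_val]
  have := Nat.mul_le_mul_left K (Nat.succ_le_of_lt hi)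
  rw [Nat.mul_succ] at this
  omega

theorem Matrix.linearIndependent_vecMulVec_single {R m n ι : Type*} [CommRing R]
    [DecidableEq n] (v : n → ι → m → R) (hv : ∀ k, LinearIndependent R (v k)) :
    LinearIndependent R fun p : ι × n => vecMulVec (v p.2 p.1) (Pi.single p.2 1) := by
  have hsingle := (Pi.linearIndependent_single v hv).comp
    ((Equiv.prodComm ι n).trans (Equiv.sigmaEquivProd n ι).symm) (Equiv.injective _)
  convert hsingle.map' (transposeLinearEquiv n m R R).toLinearMap (LinearEquiv.ker _) using 1
  · ext p i j
    change vecMulVec _ _ i j = (Pi.single p.2 (v p.2 p.1) : n → m → R) j i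
    by_cases h : j = p.2 <;> simp [vecMulVec_apply, h]
  all_goals rfl

theorem LinearIndependent.ncard_le_finrank_of_forall_mem_range {R ι E V : Type*}
    [DivisionRing R] [AddCommGroup E] [Module R E] [FiniteDimensional R E] [AddCommGroup V]
    [Module R V] [Finite ι] {v : ι → V} (hv : LinearIndependent R v) (L : E →ₗ[R] V)
    {s : Set ι} (hs : ∀ i ∈ s, v i ∈ LinearMap.range L) : s.ncard ≤ Module.finrank R E := by
  choose w hw using fun i : s => hs i i.2
  have hw_li : LinearIndependent R (L ∘ w) := by
    convert hv.comp _ Subtype.val_injective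
    exact funext hw
  have := Fintype.ofFinite s
  rw [← Nat.card_coe_set_eq, Nat.card_eq_fintype_card]
  exact hw_li.of_comp.fintype_card_le_finrank

theorem bilinear_measurements_basis_iff_general (J K : ℕ)
    (f : Fin K → ℝ → ℝ)
    (hmeas : ∀ k, Measurable (f k))
    (hzero : ∀ c : Fin K → ℝ, c ≠ 0 →
      volume {t : ℝ | ∑ k, c k * f k t = 0} = 0)
    (g : Fin (J * K) → Fin J → ℝ)
    (hgen : ∀ v : Fin J → Fin J → ℝ, (∀ i, ∃ n, v i = g n) →
      Function.Injective v → LinearIndependent ℝ v) :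
    (∀ a : Fin J → ℝ, {n : Fin (J * K) | g n = a}.ncard ≤ K) ↔
      volume {t : Fin (J * K) → ℝ |
        ¬ (LinearIndependent ℝ
              (fun n : Fin (J * K) =>
                (Matrix.of fun (j : Fin J) (k : Fin K) => g n j * f k (t n) :
                  Matrix (Fin J) (Fin K) ℝ)) ∧
            Submodule.span ℝ
              (Set.range (fun n : Fin (J * K) =>
                (Matrix.of fun (j : Fin J) (k : Fin K) => g n j * f k (t n) :
                  Matrix (Fin J) (Fin K) ℝ))) = ⊤)} = 0 := by
  constructor
  · intro hcard
    obtain ⟨τ, hτ⟩ := exists_equiv_injective_column (fun n => toLex (g n)) (by simpa using hcard)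
    have hli₀ : LinearIndependent ℝ fun n =>
        vecMulVecBilin ℝ ℝ (g n) (Pi.single (τ.symm n).2 1 : Fin K → ℝ) := by
      have := (linearIndependent_vecMulVec_single (fun k i => g (τ (i, k)))
        fun k => hgen _ (fun i => ⟨_, rfl⟩) fun i j h => hτ k (congrArg toLex h)).comp _
          τ.symm.injective
      simpa [Function.comp_def] using this
    have hspan₀ := hli₀.span_eq_top_of_card_eq_finrank' (by simp [Module.finrank_matrix])
    exact ae_iff.1 (ae_linearIndependent_and_span_eq_top volume (F := fun t k => f k t)
      (measurable_pi_lambda _ hmeas) hzero (fun n => vecMulVecBilin ℝ ℝ (g n)) hli₀ hspan₀)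
  · intro hnull a
    by_contra! ha
    have hbad (t : Fin (J * K) → ℝ) : ¬ LinearIndependent ℝ (fun n : Fin (J * K) =>
        (Matrix.of fun j k => g n j * f k (t n) : Matrix (Fin J) (Fin K) ℝ)) := fun hli_t =>
      ha.not_ge <| (hli_t.ncard_le_finrank_of_forall_mem_range (vecMulVecBilin ℝ ℝ a)
        fun n hn => ⟨fun k => f k (t n), by rw [← hn]; rfl⟩).trans_eq (Module.finrank_fin_fun ℝ)
    refine NeZero.ne (volume (Set.univ : Set (Fin (J * K) → ℝ))) (measure_mono_null ?_ hnull)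
    exact fun t _ h => hbad t h.1

/-- **Theorem 1 (Basis of Bilinear Measurements), equivalence form.**
Let `N = J*K`, let `f₀, …, f_{K-1}` be an admissible function family (measurable,
linearly independent, every nonzero linear combination vanishes only on a null set),
and let `g₀, …, g_{N-1} ∈ ℝ^J` be in general position (any `J` pairwise-distinct
values among them are linearly independent).  Then no value occurs more than `K`
times among the `gₙ` **iff** the set of time tuples for which the rank-one matrices
`gₙ f(tₙ)ᵀ` fail to be a basis of `ℝ^{J×K}` is Lebesgue-null. -/
theorem bilinear_measurements_basis_iff (J K : ℕ) (hJ : 1 ≤ J) (hK : 1 ≤ K)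
    (f : Fin K → ℝ → ℝ)
    (hmeas : ∀ k, Measurable (f k))
    (hli : LinearIndependent ℝ f)
    (hzero : ∀ c : Fin K → ℝ, c ≠ 0 →
      volume {t : ℝ | ∑ k, c k * f k t = 0} = 0)
    (g : Fin (J * K) → Fin J → ℝ)
    (hgen : ∀ v : Fin J → Fin J → ℝ, (∀ i, ∃ n, v i = g n) →
      Function.Injective v → LinearIndependent ℝ v) :
    (∀ a : Fin J → ℝ, {n : Fin (J * K) | g n = a}.ncard ≤ K) ↔
      volume {t : Fin (J * K) → ℝ |
        ¬ (LinearIndependent ℝ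
              (fun n : Fin (J * K) =>
                (Matrix.of fun (j : Fin J) (k : Fin K) => g n j * f k (t n) :
                  Matrix (Fin J) (Fin K) ℝ)) ∧
            Submodule.span ℝ
              (Set.range (fun n : Fin (J * K) =>
                (Matrix.of fun (j : Fin J) (k : Fin K) => g n j * f k (t n) :
                  Matrix (Fin J) (Fin K) ℝ))) = ⊤)} = 0 :=
  bilinear_measurements_basis_iff_general J K f hmeas hzero g hgen
end

section
/- Let J, K ≥ 1, N = JK, and let M ∈ ℝ^{N×N}. For permutations σ, π of {0,…,N−1} declare σ ∼_J π iff for every k < K the sets {σ(Jk+j) : 0 ≤ j < J} and {π(Jk+j) : 0 ≤ j < J} are equal; this is an equivalence relation on the symmetric group. For a permutation σ and k < K, let M_{σ,k} denote the J×J submatrix of M formed by rows Jk, Jk+1, …, J(k+1)−1 and columns σ(Jk), σ(Jk+1), …, σ(J(k+1)−1) (in that order). Then the quantity sgn(σ)·∏_{k=0}^{K−1} det(M_{σ,k}) depends only on the ∼_J-equivalence class of σ, and det(M) = Σ_{[σ] ∈ P_N/∼_J} sgn(σ*)·∏_{k=0}^{K−1} det(M_{σ*,k}), where the sum ranges over the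 equivalence classes and σ* is any representative of the class [σ]. -/
open MeasureTheory

/-- The index `J*k + j` of `Fin (J*K)`, for `k < K` and `j < J`. -/
def blockIdx (J K : ℕ) (k : Fin K) (j : Fin J) : Fin (J * K) :=
  ⟨J * k + j, by
    have h1 : J * (k : ℕ) + (j : ℕ) < J * ((k : ℕ) + 1) := by
      rw [Nat.mul_succ]; exact Nat.add_lt_add_left j.isLt _
    exact lt_of_lt_of_le h1 (Nat.mul_le_mul le_rfl k.isLt)⟩

/-- The relation `σ ∼_J π`: for every `k < K`, the sets
`{σ(Jk+j) : j < J}` and `{π(Jk+j) : j < J}` coincide. -/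
def permBlockRel (J K : ℕ) (σ π : Equiv.Perm (Fin (J * K))) : Prop :=
  ∀ k : Fin K,
    Finset.image (fun j : Fin J => σ (blockIdx J K k j)) Finset.univ =
      Finset.image (fun j : Fin J => π (blockIdx J K k j)) Finset.univ

/-- The summand `sgn(σ) ⋅ ∏_{k<K} det(M_{σ,k})`, where `M_{σ,k}` is the `J×J`
submatrix of `M` with rows `Jk, …, J(k+1)-1` and columns `σ(Jk), …, σ(J(k+1)-1)`. -/
noncomputable def permBlockTerm (J K : ℕ) (M : Matrix (Fin (J * K)) (Fin (J * K)) ℝ)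
    (σ : Equiv.Perm (Fin (J * K))) : ℝ :=
  ((Equiv.Perm.sign σ : ℤ) : ℝ) *
    ∏ k : Fin K,
      Matrix.det (Matrix.of fun j j' : Fin J => M (blockIdx J K k j) (σ (blockIdx J K k j')))

/-!
`σ ∼_J π` holds exactly when `π = σ ∘ τ` for a block-diagonal permutation `τ = (τ_k)_k` that
permutes each block `{Jk, …, Jk + J - 1}` within itself. Expanding every `det M_{σ,k}` by the
Leibniz formula over `τ_k` and multiplying out, `sgn σ ⋅ ∏_k det M_{σ,k}` becomes the sum of the
Leibniz terms `sgn π ⋅ ∏_i M_{i,π(i)}` over the class of `σ`, because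
`sgn (σ ∘ τ) = sgn σ ⋅ ∏_k sgn τ_k`. So the summand is a class function, and summing it over one
representative per class regroups the Leibniz expansion of `det M`.
-/

open Equiv Finset

theorem Matrix.det_eq_sum_sign_mul_prod_apply {n R : Type*} [Fintype n] [DecidableEq n]
    [CommRing R] (A : Matrix n n R) :
    A.det = ∑ σ : Perm n, ((Perm.sign σ : ℤ) : R) * ∏ i, A i (σ i) := by
  rw [← det_transpose, det_apply']
  rfl

theorem Fintype.sum_eq_sum_sum_filter_of_existsUnique {α β : Type*} [Fintype α]
    [AddCommMonoid β] {r : α → α → Prop} [DecidableRel r] (hr : Equivalence r)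
    (R : Finset α) (hR : ∀ a, ∃! b, b ∈ R ∧ r a b) (f : α → β) :
    ∑ a, f a = ∑ b ∈ R, ∑ a with r b a, f a := by
  classical
  choose rep hrep hrep_unique using hR
  rw [← sum_fiberwise_of_maps_to (g := rep) (t := R) fun a _ => (hrep a).1]
  refine Finset.sum_congr rfl fun b hb => Finset.sum_congr ?_ fun _ _ => rfl
  ext a
  simp only [mem_filter, mem_univ, true_and]
  exact ⟨fun h => h ▸ hr.symm (hrep a).2, fun h => (hrep_unique a b ⟨hb, hr.symm h⟩).symm⟩

section Blocks

variable {J K : ℕ}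

def blockEquiv (J K : ℕ) : Fin K × Fin J ≃ Fin (J * K) :=
  finProdFinEquiv.trans (finCongr (Nat.mul_comm K J))

@[simp]
lemma blockEquiv_apply (k : Fin K) (j : Fin J) : blockEquiv J K (k, j) = blockIdx J K k j :=
  Fin.ext <| by simp [blockEquiv, blockIdx, Nat.add_comm]

lemma blockIdx_injective (k : Fin K) : Function.Injective (blockIdx J K k) := fun j j' h => by
  have : blockEquiv J K (k, j) = blockEquiv J K (k, j') := by simpa using h
  exact congrArg Prod.snd ((blockEquiv J K).injective this)

lemma prod_fin_mul_eq_prod_blockIdx {β : Type*} [CommMonoid β] (f : Fin (J * K) → β) :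
    ∏ i, f i = ∏ k, ∏ j, f (blockIdx J K k j) := by
  rw [← (blockEquiv J K).prod_comp, Fintype.prod_prod_type]
  simp

def blockPerm (τ : Fin K → Perm (Fin J)) : Perm (Fin (J * K)) :=
  (blockEquiv J K).permCongr (prodCongrRight τ)

@[simp]
lemma blockPerm_apply_blockIdx (τ : Fin K → Perm (Fin J)) (k : Fin K) (j : Fin J) :
    blockPerm τ (blockIdx J K k j) = blockIdx J K k (τ k j) := by
  simp [blockPerm, ← blockEquiv_apply, permCongr_apply]

lemma sign_blockPerm (τ : Fin K → Perm (Fin J)) :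
    Perm.sign (blockPerm τ) = ∏ k, Perm.sign (τ k) := by
  rw [blockPerm, Perm.sign_permCongr, Perm.sign_prodCongrRight]

lemma blockPerm_injective : Function.Injective (blockPerm : (Fin K → Perm (Fin J)) → _) :=
  fun τ τ' h => funext fun k => Equiv.ext fun j =>
    blockIdx_injective k (by simpa using DFunLike.congr_fun h (blockIdx J K k j))

lemma permBlockRel_iff_exists_blockPerm {σ π : Perm (Fin (J * K))} :
    permBlockRel J K σ π ↔ ∃ τ, π = σ * blockPerm τ := by
  constructor
  · intro h
    have hmem (k : Fin K) (j : Fin J) : ∃ j', σ (blockIdx J K k j') = π (blockIdx J K k j) := by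
      have := mem_image_of_mem (fun j => π (blockIdx J K k j)) (mem_univ j)
      rw [← h k] at this
      simpa using this
    choose τ hτ using hmem
    have hτ_inj (k : Fin K) : Function.Injective (τ k) := fun j j' hj =>
      blockIdx_injective k (π.injective (by rw [← hτ, ← hτ, hj]))
    refine ⟨fun k => Equiv.ofBijective (τ k) (hτ_inj k).bijective_of_finite, ?_⟩
    ext i
    obtain ⟨⟨k, j⟩, rfl⟩ := (blockEquiv J K).surjective i
    simp [hτ]
  · rintro ⟨τ, rfl⟩ k
    have : (fun j => (σ * blockPerm τ) (blockIdx J K k j)) =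
        (fun j => σ (blockIdx J K k j)) ∘ τ k := by
      funext j
      simp
    rw [this, ← image_image, image_univ_equiv]

lemma permBlockRel_equivalence : Equivalence (permBlockRel J K) where
  refl _ _ := rfl
  symm h k := (h k).symm
  trans h h' k := (h k).trans (h' k)

instance : DecidableRel (permBlockRel J K) := fun _ _ => Fintype.decidableForallFintype

end Blocks

lemma permBlockTerm_eq_sum_filter {J K : ℕ} (M : Matrix (Fin (J * K)) (Fin (J * K)) ℝ)
    (σ : Perm (Fin (J * K))) :
    permBlockTerm J K M σ =
      ∑ π with permBlockRel J K σ π, ((Perm.sign π : ℤ) : ℝ) * ∏ i, M i (π i) := by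
  have hclass : ({π | permBlockRel J K σ π} : Finset _) = univ.image (σ * blockPerm ·) := by
    ext π
    simp [permBlockRel_iff_exists_blockPerm, eq_comm]
  rw [hclass, sum_image fun τ _ τ' _ h => blockPerm_injective (mul_left_cancel h),
    permBlockTerm]
  simp_rw [Matrix.det_eq_sum_sign_mul_prod_apply, Fintype.prod_sum, mul_sum]
  refine Fintype.sum_congr _ _ fun τ => ?_
  simp only [Perm.mul_apply, prod_fin_mul_eq_prod_blockIdx (fun i => M i _),
    blockPerm_apply_blockIdx, map_mul, sign_blockPerm, Matrix.of_apply, prod_mul_distrib]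
  push_cast
  ring

theorem det_split_over_perm_classes_general (J K : ℕ)
    (M : Matrix (Fin (J * K)) (Fin (J * K)) ℝ) :
    Equivalence (permBlockRel J K) ∧
      (∀ σ π : Equiv.Perm (Fin (J * K)), permBlockRel J K σ π →
        permBlockTerm J K M σ = permBlockTerm J K M π) ∧
      ∀ R : Finset (Equiv.Perm (Fin (J * K))),
        (∀ σ : Equiv.Perm (Fin (J * K)), ∃! π, π ∈ R ∧ permBlockRel J K σ π) →
        M.det = ∑ σ ∈ R, permBlockTerm J K M σ := by
  have hrel := permBlockRel_equivalence (J := J) (K := K)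
  refine ⟨hrel, fun σ π h => ?_, fun R hR => ?_⟩
  · simp only [permBlockTerm_eq_sum_filter]
    congr 1
    ext ρ
    simp only [mem_filter, mem_univ, true_and]
    exact ⟨hrel.trans (hrel.symm h), hrel.trans h⟩
  · simp only [Matrix.det_eq_sum_sign_mul_prod_apply, permBlockTerm_eq_sum_filter]
    exact Fintype.sum_eq_sum_sum_filter_of_existsUnique hrel R hR _

/-- **Lemma 1 (Splitting determinant over permutations).**  The relation `∼_J` is an
equivalence relation on permutations of `{0, …, JK-1}`, the quantity
`sgn(σ) ⋅ ∏_k det(M_{σ,k})` depends only on the `∼_J`-class of `σ`, and for every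
system of representatives `R` (one permutation from each class)
`det M = ∑_{σ ∈ R} sgn(σ) ⋅ ∏_{k<K} det(M_{σ,k})`. -/
theorem det_split_over_perm_classes (J K : ℕ) (hJ : 1 ≤ J) (hK : 1 ≤ K)
    (M : Matrix (Fin (J * K)) (Fin (J * K)) ℝ) :
    Equivalence (permBlockRel J K) ∧
      (∀ σ π : Equiv.Perm (Fin (J * K)), permBlockRel J K σ π →
        permBlockTerm J K M σ = permBlockTerm J K M π) ∧
      ∀ R : Finset (Equiv.Perm (Fin (J * K))),
        (∀ σ : Equiv.Perm (Fin (J * K)), ∃! π, π ∈ R ∧ permBlockRel J K σ π) →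
        M.det = ∑ σ ∈ R, permBlockTerm J K M σ :=
  det_split_over_perm_classes_general J K M
end

section
/- Let K ≥ 1 and let f_0,…,f_{K−1} : ℝ → ℝ be Lebesgue-measurable, linearly independent functions such that every nonzero linear combination of them has a zero set of Lebesgue measure zero. For real coefficients (α_σ)_{σ ∈ P_K} indexed by permutations of {0,…,K−1}, define h : ℝ^K → ℝ by h(t_0,…,t_{K−1}) = Σ_{σ ∈ P_K} α_σ ∏_{k=0}^{K−1} f_{σ(k)}(t_k). Then either all coefficients α_σ are zero, or the zero set {t ∈ ℝ^K : h(t) = 0} has K-dimensional Lebesgue measure zero. -/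
/-!
Treat the sum over permutations as a special case of an arbitrary linear combination
`h(t) = ∑_i β_i ∏_k f_{i_k}(t_k)` over all multi-indices `i : Fin n → ι`, and induct on `n`.
Splitting off the first coordinate, `h(x, y) = ∑_{i'} γ_{i'}(x) ∏_k f_{i'_k}(y_k)` with
`γ_{i'}(x) = ∑_j β_{(j, i')} f_j(x)`. Some `(β_{(j, i')})_j` is a nonzero vector, so the
hypothesis on `f` makes `γ(x) ≠ 0` for a.e. `x`; by induction a.e. section `{y | h(x, y) = 0}`
is null, and so is the whole zero set by Fubini–Tonelli.
-/

open MeasureTheory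

section TensorCombination

variable {X ι : Type*} [Fintype ι] (f : ι → X → ℝ)

def tensorCombination {n : ℕ} (β : (Fin n → ι) → ℝ) (t : Fin n → X) : ℝ :=
  ∑ i, β i * ∏ k, f (i k) (t k)

theorem tensorCombination_cons {n : ℕ} (β : (Fin (n + 1) → ι) → ℝ) (x : X) (y : Fin n → X) :
    tensorCombination f β (Fin.cons x y) =
      tensorCombination f (fun i => ∑ j, β (Fin.cons j i) * f j x) y := by
  simp only [tensorCombination, ← (Fin.consEquiv fun _ => ι).sum_comp, Fintype.sum_prod_type,
    Fin.consEquiv, Equiv.coe_fn_mk, Fin.prod_univ_succ, Fin.cons_zero, Fin.cons_succ,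
    Finset.sum_mul]
  rw [Finset.sum_comm]
  exact Finset.sum_congr rfl fun _ _ => Finset.sum_congr rfl fun _ _ => by ring

theorem sum_mul_prod_eq_tensorCombination {I : Type*} [Fintype I] {n : ℕ} {g : I → Fin n → ι}
    (hg : g.Injective) (α : I → ℝ) (t : Fin n → X) :
    ∑ a, α a * ∏ k, f (g a k) (t k) = tensorCombination f (Function.extend g α 0) t :=
  Fintype.sum_of_injective g hg _ _
    (fun i hi => by simp [Function.extend_apply' _ _ _ hi]) (fun a => by rw [hg.extend_apply])

variable [MeasurableSpace X]

variable {μ : Measure X}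

theorem ae_tensorCombination_cons_coeff_ne_zero
    (hzero : ∀ c : ι → ℝ, c ≠ 0 → μ {x | ∑ j, c j * f j x = 0} = 0)
    {n : ℕ} {β : (Fin (n + 1) → ι) → ℝ} (hβ : β ≠ 0) :
    ∀ᵐ x ∂μ, (fun i => ∑ j, β (Fin.cons j i) * f j x) ≠ 0 := by
  obtain ⟨i₀, hi₀⟩ := Function.ne_iff.mp hβ
  have hc : (fun j => β (Fin.cons j (Fin.tail i₀))) ≠ 0 :=
    Function.ne_iff.mpr ⟨i₀ 0, by simpa [Fin.cons_self_tail] using hi₀⟩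
  filter_upwards [measure_eq_zero_iff_ae_notMem.mp (hzero _ hc)] with x hx hγ
  exact hx (congrFun hγ (Fin.tail i₀))

variable [SigmaFinite μ]

theorem measure_setOf_tensorCombination_eq_zero (hf : ∀ i, Measurable (f i))
    (hzero : ∀ c : ι → ℝ, c ≠ 0 → μ {x | ∑ j, c j * f j x = 0} = 0) :
    ∀ {n : ℕ} {β : (Fin n → ι) → ℝ}, β ≠ 0 →
      Measure.pi (fun _ : Fin n => μ) {t | tensorCombination f β t = 0} = 0
  | 0, β, hβ => by
    obtain ⟨i, hi⟩ := Function.ne_iff.mp hβ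
    have hβ₀ : β default ≠ 0 := Subsingleton.elim i default ▸ hi
    simp [tensorCombination, hβ₀]
  | n + 1, β, hβ => by
    let S : Set (X × (Fin n → X)) :=
      {p | tensorCombination f (fun i => ∑ j, β (Fin.cons j i) * f j p.1) p.2 = 0}
    have hS : MeasurableSet S :=
      measurableSet_eq_fun (by unfold tensorCombination; fun_prop) measurable_const
    have hpre : {t | tensorCombination f β t = 0} =
        MeasurableEquiv.piFinSuccAbove (fun _ => X) 0 ⁻¹' S := by
      ext t
      conv_lhs => rw [Set.mem_ofPred_eq, ← Fin.cons_self_tail t, tensorCombination_cons]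
      rfl
    rw [hpre, (measurePreserving_piFinSuccAbove (fun _ => μ) 0).measure_preimage_equiv,
      Measure.measure_prod_null hS]
    filter_upwards [ae_tensorCombination_cons_coeff_ne_zero f hzero hβ] with x hx
      using measure_setOf_tensorCombination_eq_zero hf hzero hx

theorem measure_setOf_sum_mul_prod_eq_zero (hf : ∀ i, Measurable (f i))
    (hzero : ∀ c : ι → ℝ, c ≠ 0 → μ {x | ∑ j, c j * f j x = 0} = 0)
    {I : Type*} [Fintype I] {n : ℕ} {g : I → Fin n → ι} (hg : g.Injective)
    {α : I → ℝ} (hα : α ≠ 0) :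
    Measure.pi (fun _ : Fin n => μ) {t | ∑ a, α a * ∏ k, f (g a k) (t k) = 0} = 0 := by
  simp_rw [sum_mul_prod_eq_tensorCombination f hg]
  refine measure_setOf_tensorCombination_eq_zero f hf hzero ?_
  obtain ⟨a, ha⟩ := Function.ne_iff.mp hα
  exact Function.ne_iff.mpr ⟨g a, by rwa [hg.extend_apply]⟩

end TensorCombination

theorem measure_zero_of_perm_sum_general (K : ℕ)
    (f : Fin K → ℝ → ℝ)
    (hmeas : ∀ k, Measurable (f k))
    (hzero : ∀ c : Fin K → ℝ, c ≠ 0 →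
      volume {t : ℝ | ∑ k, c k * f k t = 0} = 0)
    (α : Equiv.Perm (Fin K) → ℝ) :
    (∀ σ : Equiv.Perm (Fin K), α σ = 0) ∨
      volume {t : Fin K → ℝ |
        ∑ σ : Equiv.Perm (Fin K), α σ * ∏ k : Fin K, f (σ k) (t k) = 0} = 0 := by
  refine or_iff_not_imp_left.mpr fun hα => ?_
  rw [volume_pi]
  exact measure_setOf_sum_mul_prod_eq_zero f hmeas hzero DFunLike.coe_injective
    fun h => hα (congrFun h)

/-- **Lemma 2 (Measure zero).**  Let `f₀, …, f_{K-1} : ℝ → ℝ` be measurable,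
linearly independent functions such that every nonzero linear combination of them
has a null zero set.  For coefficients `α_σ` indexed by permutations of
`{0, …, K-1}`, the function `h(t) = ∑_σ α_σ ∏_k f_{σ(k)}(t_k)` either has all
coefficients zero, or its zero set is Lebesgue-null in `ℝ^K`. -/
theorem measure_zero_of_perm_sum (K : ℕ) (hK : 1 ≤ K)
    (f : Fin K → ℝ → ℝ)
    (hmeas : ∀ k, Measurable (f k))
    (hli : LinearIndependent ℝ f)
    (hzero : ∀ c : Fin K → ℝ, c ≠ 0 →
      volume {t : ℝ | ∑ k, c k * f k t = 0} = 0)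
    (α : Equiv.Perm (Fin K) → ℝ) :
    (∀ σ : Equiv.Perm (Fin K), α σ = 0) ∨
      volume {t : Fin K → ℝ |
        ∑ σ : Equiv.Perm (Fin K), α σ * ∏ k : Fin K, f (σ k) (t k) = 0} = 0 :=
  measure_zero_of_perm_sum_general K f hmeas hzero α
end

section
/- Let J, K ≥ 1 and let ℓ : S → A be a labeling of a finite set S of cardinality JK by elements of a set A. Then the following are equivalent: (i) every label value has at most K preimages under ℓ; (ii) there exists a partition of S into K blocks, each of cardinality J, such that ℓ is injective on each block. Equivalently (contrapositive of (ii)⇒(i) via pigeonhole): if for every partition of S into K blocks of size J some block contains two elements with the same label, then some label value occurs at least K+1 times. -/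
/-!
Fix any linear order on the labels and list `S` as `s₀, …, s_{JK-1}` with nondecreasing labels,
so that each label occupies a run of at most `K` consecutive positions. Dealing the list
round-robin into `K` blocks (position `i` goes to block `i % K`) gives blocks of size `J`,
and two positions in the same run differ by less than `K`, hence land in different blocks.
Conversely, the block containing an element maps each fibre of `ℓ` injectively into the
`K` blocks.
-/

theorem Monotone.eq_of_mod_eq_of_ncard_fiber_le {α : Type*} [PartialOrder α] {n K : ℕ}
    {f : Fin n → α} (hf : Monotone f) (hfiber : ∀ a, {i | f i = a}.ncard ≤ K) {i j : Fin n}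
    (hij : f i = f j) (hmod : (i : ℕ) % K = j % K) : i = j := by
  wlog hle : i ≤ j generalizing i j
  · exact (this hij.symm hmod.symm (le_of_not_ge hle)).symm
  by_contra hne
  have hgap : (i : ℕ) + K ≤ j := by
    have hdvd : K ∣ (j : ℕ) - i := (Nat.modEq_iff_dvd' hle).1 hmod
    have hpos : 0 < (j : ℕ) - i := Nat.sub_pos_of_lt (lt_of_le_of_ne hle hne : i < j)
    have := Nat.le_of_dvd hpos hdvd
    omega
  have hrun : (Finset.Icc i j : Set (Fin n)) ⊆ {m | f m = f i} := fun m hm => by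
    rw [Finset.coe_Icc, Set.mem_Icc] at hm
    exact le_antisymm (hij ▸ hf hm.2) (hf hm.1)
  have hcard := (Set.ncard_le_ncard hrun).trans (hfiber (f i))
  rw [Set.ncard_coe_finset, Fin.card_Icc] at hcard
  omega

theorem exists_equiv_fin_monotone_comp {S A : Type*} [Fintype S] [LinearOrder A] {n : ℕ}
    (hn : Fintype.card S = n) (ℓ : S → A) : ∃ e : Fin n ≃ S, Monotone (ℓ ∘ e) :=
  let e₀ := (Fintype.equivFinOfCardEq hn).symm
  ⟨(Tuple.sort (ℓ ∘ e₀)).trans e₀, Tuple.monotone_sort (ℓ ∘ e₀)⟩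

theorem exists_injOn_partition_of_ncard_fiber_le {S A : Type*} [Fintype S] {J K : ℕ}
    (hS : Fintype.card S = J * K) (ℓ : S → A) (hfiber : ∀ a, {s | ℓ s = a}.ncard ≤ K) :
    ∃ B : Fin K → Finset S,
      (∀ k, (B k).card = J) ∧ (∀ s, ∃! k, s ∈ B k) ∧ ∀ k, Set.InjOn ℓ (B k : Set S) := by
  classical
  let _ : LinearOrder A := linearOrderOfSTO WellOrderingRel
  obtain ⟨e, he⟩ := exists_equiv_fin_monotone_comp hS ℓ
  set φ : Fin J × Fin K ≃ S := finProdFinEquiv.trans e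
  have hmem : ∀ k s, s ∈ Finset.univ.image (fun j => φ (j, k)) ↔ (φ.symm s).2 = k := by
    intro k s
    rw [Finset.mem_image]
    constructor
    · rintro ⟨j, -, rfl⟩
      simp
    · rintro rfl
      exact ⟨(φ.symm s).1, Finset.mem_univ _, φ.apply_symm_apply s⟩
  refine ⟨fun k => Finset.univ.image (fun j => φ (j, k)), fun k => ?_, fun s => ?_,
    fun k s hs t ht hst => ?_⟩
  · have hinj : Function.Injective fun j => φ (j, k) :=
      φ.injective.comp (Prod.mk_left_injective k)
    simp [Finset.card_image_of_injective _ hinj]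
  · exact ⟨(φ.symm s).2, (hmem _ s).2 rfl, fun k hk => ((hmem k s).1 hk).symm⟩
  · have hfiber' : ∀ a, {i | (ℓ ∘ e) i = a}.ncard ≤ K := fun a =>
      (Set.ncard_preimage_of_injective_subset_range e.injective (by simp)).trans_le (hfiber a)
    have hres : ((e.symm s : ℕ) % K) = (e.symm t : ℕ) % K := by
      have hs' := (hmem k s).1 hs
      have ht' := (hmem k t).1 ht
      simp only [φ, Equiv.symm_trans_apply, finProdFinEquiv_symm_apply] at hs' ht'
      rw [← Fin.coe_modNat, ← Fin.coe_modNat, hs', ht']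
    simpa using he.eq_of_mod_eq_of_ncard_fiber_le hfiber' (by simpa using hst) hres

theorem ncard_fiber_le_of_injOn_cover {S A ι : Type*} [Finite ι] (ℓ : S → A) (B : ι → Set S)
    (hcover : ∀ s, ∃ k, s ∈ B k) (hinj : ∀ k, Set.InjOn ℓ (B k)) (a : A) :
    {s | ℓ s = a}.ncard ≤ Nat.card ι := by
  choose block hblock using hcover
  rw [← Set.ncard_univ]
  refine Set.ncard_le_ncard_of_injOn block (fun _ _ => Set.mem_univ _) ?_
  intro s hs t ht hst
  exact hinj (block s) (hblock s) (hst ▸ hblock t) (hs.trans ht.symm)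

theorem label_bound_iff_injective_partition_general (J K : ℕ)
    {S A : Type*} [Fintype S] (hS : Fintype.card S = J * K) (ℓ : S → A) :
    (∀ a : A, {s : S | ℓ s = a}.ncard ≤ K) ↔
      ∃ B : Fin K → Finset S,
        (∀ k, (B k).card = J) ∧
        (∀ s : S, ∃! k, s ∈ B k) ∧
        ∀ k, Set.InjOn ℓ (B k : Set S) := by
  refine ⟨exists_injOn_partition_of_ncard_fiber_le hS ℓ, ?_⟩
  rintro ⟨B, -, hunique, hinj⟩ a
  simpa using ncard_fiber_le_of_injOn_cover ℓ (fun k => (B k : Set S))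
    (fun s => (hunique s).exists) hinj a

/-- **Combinatorial step in the proof of Theorem 1.**  Let `S` be a finite set of
cardinality `J*K` and `ℓ : S → A` a labeling.  Then every label value has at most
`K` preimages **iff** `S` can be partitioned into `K` blocks of size `J` on each of
which `ℓ` is injective. -/
theorem label_bound_iff_injective_partition (J K : ℕ) (hJ : 1 ≤ J) (hK : 1 ≤ K)
    {S A : Type*} [Fintype S] (hS : Fintype.card S = J * K) (ℓ : S → A) :
    (∀ a : A, {s : S | ℓ s = a}.ncard ≤ K) ↔
      ∃ B : Fin K → Finset S,
        (∀ k, (B k).card = J) ∧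
        (∀ s : S, ∃! k, s ∈ B k) ∧
        ∀ k, Set.InjOn ℓ (B k : Set S) :=
  label_bound_iff_injective_partition_general J K hS ℓ
end

section
/- Let D, K ≥ 1 and define f(t) = (1, t, …, t^{K−1}) ∈ ℝ^K. Let a_0,…,a_{M−1} ∈ ℝ^D be anchor points, let N ≥ 1, let m : {0,…,N−1} → {0,…,M−1} assign an anchor to each measurement, and set k_m = #{n : m(n) = m}. Assume Σ_{m=0}^{M−1} min(k_m, K) < K(D+1). Then for every choice of sampling times (t_0,…,t_{N−1}) ∈ ℝ^N, the matrix C is not uniquely determined by the linearized system: there exist matrices C ≠ C' in ℝ^{D×K} and symmetric matrices L, L' ∈ ℝ^{K×K} such that a_{m(n)}ᵀ C f(t_n) − ½ f(t_n)ᵀ L f(t_n) = a_{m(n)}ᵀ C' f(t_n) − ½ f(t_n)ᵀ L' f(t_n) for every n = 0,…,N−1. -/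
/-!
Write `x n = f(t n)`. Both the measurements `a (μ n) ⬝ᵥ C *ᵥ x n` and the functionals
`n ↦ x n ⬝ᵥ q` lie in the span of the vectors `n ↦ [μ n = m] (x n ⬝ᵥ q)`, whose dimension is at
most `∑ₘ min(kₘ, K)`. So if this is `< K (D + 1)`, the map
`(C, q) ↦ (a (μ n) ⬝ᵥ C *ᵥ x n - x n ⬝ᵥ q)ₙ` has a nonzero kernel vector, and one with `C ≠ 0`
can be extracted from it. Since the first coordinate of `x n` is `1`, `x n ⬝ᵥ q` is half the
quadratic form of the symmetric matrix `e₀ qᵀ + q e₀ᵀ` at `x n`; hence `(C, e₀ qᵀ + q e₀ᵀ)` and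
`(0, 0)` produce the same linearized measurements.
-/

open Module Matrix

theorem Submodule.finrank_iSup_le_sum {K V ι : Type*} [DivisionRing K] [AddCommGroup V]
    [Module K V] [FiniteDimensional K V] [Fintype ι] (p : ι → Submodule K V) :
    finrank K ↥(⨆ i, p i) ≤ ∑ i, finrank K ↥(p i) := by
  classical
  rw [← Finset.sup_univ_eq_iSup]
  induction (Finset.univ : Finset ι) using Finset.induction_on with
  | empty => simp
  | insert i s hi ih =>
    rw [Finset.sup_insert, Finset.sum_insert hi]
    exact (finrank_add_le_finrank_add_finrank _ _).trans (by omega)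

theorem Matrix.exists_isSymm_dotProduct_mulVec_self_eq {R κ : Type*} [CommRing R] [Fintype κ]
    [DecidableEq κ] (k₀ : κ) (q : κ → R) :
    ∃ L : Matrix κ κ R, L.IsSymm ∧ ∀ v : κ → R, v k₀ = 1 → v ⬝ᵥ L *ᵥ v = 2 * (v ⬝ᵥ q) := by
  refine ⟨vecMulVec (Pi.single k₀ 1) q + vecMulVec q (Pi.single k₀ 1), ?_, fun v hv => ?_⟩
  · simp [IsSymm, add_comm]
  · simp only [add_mulVec, vecMulVec_mulVec, op_smul_eq_smul, dotProduct_add, dotProduct_smul,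
      dotProduct_single, single_dotProduct, dotProduct_comm q, hv, smul_eq_mul, mul_one]
    ring

section BilinearMeasurement

variable {ι κ ν α : Type*} [Fintype ι] [Fintype κ] (a : α → ι → ℝ) (μ : ν → α) (x : ν → κ → ℝ)

def bilinearMeasurement : Matrix ι κ ℝ →ₗ[ℝ] ν → ℝ where
  toFun C n := a (μ n) ⬝ᵥ C *ᵥ x n
  map_add' C C' := by ext n; simp [add_mulVec]
  map_smul' c C := by ext n; simp [smul_mulVec]

theorem bilinearMeasurement_apply_eq_transpose (C : Matrix ι κ ℝ) :
    bilinearMeasurement a μ x C = fun n => x n ⬝ᵥ Cᵀ *ᵥ a (μ n) := by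
  ext n
  simp [bilinearMeasurement, mulVec_transpose, dotProduct_mulVec, dotProduct_comm]

theorem bilinearMeasurement_single_row [DecidableEq ι] (d : ι) (q : κ → ℝ) :
    bilinearMeasurement a μ x (of (Pi.single d q)) = fun n => a (μ n) d * (x n ⬝ᵥ q) := by
  ext n
  have hrow : of (Pi.single d q) *ᵥ x n = Pi.single d (q ⬝ᵥ x n) := by
    ext d'; by_cases h : d' = d <;> simp [mulVec, h]
  simp [bilinearMeasurement, hrow, dotProduct_comm q]

end BilinearMeasurement

section Anchors

variable {ι κ ν α : Type*} [DecidableEq α] (μ : ν → α) (x : ν → κ → ℝ)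

def anchorBlock (m : α) : Matrix ν κ ℝ :=
  of fun n => if μ n = m then x n else 0

theorem rank_anchorBlock_le [Fintype κ] [Fintype ν] (m : α) :
    (anchorBlock μ x m).rank ≤ min (Finset.univ.filter fun n => μ n = m).card (Fintype.card κ) :=
  le_min (rank_le_card_of_support_subset _ _ fun n hn => by
      by_contra h
      simp_all [anchorBlock, Function.mem_support])
    (rank_le_card_width _)

def anchoredSpan [Fintype κ] : Submodule ℝ (ν → ℝ) :=
  ⨆ m, LinearMap.range (anchorBlock μ x m).mulVecLin

theorem finrank_anchoredSpan_le [Fintype κ] [Fintype ν] [Fintype α] :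
    finrank ℝ (anchoredSpan μ x) ≤
      ∑ m, min (Finset.univ.filter fun n => μ n = m).card (Fintype.card κ) :=
  (Submodule.finrank_iSup_le_sum _).trans
    (Finset.sum_le_sum fun m _ => rank_anchorBlock_le μ x m)

theorem mem_anchoredSpan [Fintype κ] [Fintype α] (v : α → κ → ℝ) :
    (fun n => x n ⬝ᵥ v (μ n)) ∈ anchoredSpan μ x := by
  have : (fun n => x n ⬝ᵥ v (μ n)) = ∑ m, anchorBlock μ x m *ᵥ v m := by
    ext n
    rw [Finset.sum_apply, Fintype.sum_eq_single (μ n) fun m hm => by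
      simp [anchorBlock, mulVec, Ne.symm hm]]
    simp [anchorBlock, mulVec]
  rw [this]
  exact Submodule.sum_mem _ fun m _ =>
    Submodule.mem_iSup_of_mem m (LinearMap.mem_range_self _ _)

theorem exists_ne_zero_bilinearMeasurement_mem_range [Fintype ι] [Nonempty ι] [Fintype κ]
    [Fintype ν] [Fintype α] (a : α → ι → ℝ)
    (hcount : ∑ m, min (Finset.univ.filter fun n => μ n = m).card (Fintype.card κ) <
      Fintype.card κ * (Fintype.card ι + 1)) :
    ∃ C : Matrix ι κ ℝ, C ≠ 0 ∧ bilinearMeasurement a μ x C ∈ LinearMap.range (of x).mulVecLin := by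
  classical
  obtain ⟨d₀⟩ := ‹Nonempty ι›
  set Ψ := (bilinearMeasurement a μ x).coprod (-(of x).mulVecLin)
  have hΨ_apply (C q) (n : ν) : Ψ (C, q) n = a (μ n) ⬝ᵥ C *ᵥ x n - x n ⬝ᵥ q :=
    (sub_eq_add_neg _ _).symm
  have hrange : LinearMap.range Ψ ≤ anchoredSpan μ x := by
    rw [LinearMap.range_coprod, LinearMap.range_neg]
    refine sup_le ?_ ?_ <;> rintro _ ⟨C, rfl⟩
    · rw [bilinearMeasurement_apply_eq_transpose]
      exact mem_anchoredSpan μ x fun m => Cᵀ *ᵥ a m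
    · exact mem_anchoredSpan μ x fun _ => C
  have hΨ : ¬ Function.Injective Ψ := fun h => by
    have := (LinearMap.finrank_range_of_inj h).symm.trans_le
      ((Submodule.finrank_mono hrange).trans (finrank_anchoredSpan_le μ x))
    simp only [finrank_prod, finrank_matrix, finrank_self, mul_one,
      finrank_fintype_fun_eq_card] at this
    linarith
  obtain ⟨⟨C, q⟩, hCq, hne⟩ : ∃ v, Ψ v = 0 ∧ v ≠ 0 := by
    simpa [injective_iff_map_eq_zero] using hΨ
  by_cases hC : C = 0
  · -- `q ≠ 0` is orthogonal to every `x n`, so the matrix with the single row `q` works.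
    subst hC
    have hq : q ≠ 0 := by simpa using hne
    have hxq (n : ν) : x n ⬝ᵥ q = 0 := by simpa [hΨ_apply] using congrFun hCq n
    refine ⟨of (Pi.single d₀ q), fun h => hq (funext fun k => by
      simpa using congrFun (congrFun h d₀) k), 0, ?_⟩
    rw [map_zero, bilinearMeasurement_single_row]
    ext n
    simp [hxq]
  · exact ⟨C, hC, q, funext fun n =>
      (sub_eq_zero.1 ((hΨ_apply C q n).symm.trans (congrFun hCq n))).symm⟩

end Anchors

theorem continuous_localisation_not_unique_general (D K M N : ℕ) (hD : 1 ≤ D) (hK : 1 ≤ K)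
    (a : Fin M → Fin D → ℝ) (μ : Fin N → Fin M)
    (hcount : ∑ m : Fin M, min (Finset.univ.filter fun n : Fin N => μ n = m).card K <
      K * (D + 1)) :
    ∀ t : Fin N → ℝ,
      ∃ (C C' : Matrix (Fin D) (Fin K) ℝ) (L L' : Matrix (Fin K) (Fin K) ℝ),
        C ≠ C' ∧ L.IsSymm ∧ L'.IsSymm ∧
        ∀ n : Fin N,
          dotProduct (a (μ n)) (C.mulVec fun k : Fin K => t n ^ (k : ℕ)) -
              (1 / 2) * dotProduct (fun k : Fin K => t n ^ (k : ℕ))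
                (L.mulVec fun k : Fin K => t n ^ (k : ℕ)) =
            dotProduct (a (μ n)) (C'.mulVec fun k : Fin K => t n ^ (k : ℕ)) -
              (1 / 2) * dotProduct (fun k : Fin K => t n ^ (k : ℕ))
                (L'.mulVec fun k : Fin K => t n ^ (k : ℕ)) := by
  intro t
  have : Nonempty (Fin D) := ⟨⟨0, hD⟩⟩
  obtain ⟨C, hC, q, hq⟩ := exists_ne_zero_bilinearMeasurement_mem_range μ
    (fun (n : Fin N) (k : Fin K) => t n ^ (k : ℕ)) a (by simpa using hcount)
  obtain ⟨L, hL, hLq⟩ := exists_isSymm_dotProduct_mulVec_self_eq (⟨0, hK⟩ : Fin K) q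
  refine ⟨C, 0, L, 0, hC, hL, isSymm_zero, fun n => ?_⟩
  have hCn : a (μ n) ⬝ᵥ C *ᵥ (fun k : Fin K => t n ^ (k : ℕ)) =
      (fun k : Fin K => t n ^ (k : ℕ)) ⬝ᵥ q := (congrFun hq n).symm
  rw [hCn, hLq _ (by simp)]
  simp

/-- **Corollary 2, negative direction (continuous localisation).**  With the
polynomial model `f(t) = (1, t, …, t^{K-1})`, anchors `a₀, …, a_{M-1} ∈ ℝ^D` and
anchor assignment `μ`, if `∑ₘ min(kₘ, K) < K(D+1)` where `kₘ = #{n : μ(n) = m}`,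
then for every choice of sampling times the coefficient matrix is not uniquely
determined by the linearized system: there are `C ≠ C'` and symmetric `L, L'`
producing identical measurements. -/
theorem continuous_localisation_not_unique (D K M N : ℕ) (hD : 1 ≤ D) (hK : 1 ≤ K)
    (hN : 1 ≤ N) (a : Fin M → Fin D → ℝ) (μ : Fin N → Fin M)
    (hcount : ∑ m : Fin M, min (Finset.univ.filter fun n : Fin N => μ n = m).card K <
      K * (D + 1)) :
    ∀ t : Fin N → ℝ,
      ∃ (C C' : Matrix (Fin D) (Fin K) ℝ) (L L' : Matrix (Fin K) (Fin K) ℝ),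
        C ≠ C' ∧ L.IsSymm ∧ L'.IsSymm ∧
        ∀ n : Fin N,
          dotProduct (a (μ n)) (C.mulVec fun k : Fin K => t n ^ (k : ℕ)) -
              (1 / 2) * dotProduct (fun k : Fin K => t n ^ (k : ℕ))
                (L.mulVec fun k : Fin K => t n ^ (k : ℕ)) =
            dotProduct (a (μ n)) (C'.mulVec fun k : Fin K => t n ^ (k : ℕ)) -
              (1 / 2) * dotProduct (fun k : Fin K => t n ^ (k : ℕ))
                (L'.mulVec fun k : Fin K => t n ^ (k : ℕ)) :=
  continuous_localisation_not_unique_general D K M N hD hK a μ hcount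
end

section
/- Let K ≥ 1 and let f_0,…,f_{K−1} : ℝ → ℝ be Lebesgue-measurable, linearly independent functions such that every nonzero linear combination of them has a zero set of Lebesgue measure zero. Then the K! functions h_σ : ℝ^K → ℝ, h_σ(t_0,…,t_{K−1}) = ∏_{k=0}^{K−1} f_{σ(k)}(t_k), indexed by permutations σ of {0,…,K−1}, are linearly independent; indeed, any nonzero linear combination Σ_σ α_σ h_σ is nonzero outside a set of K-dimensional Lebesgue measure zero, hence is not almost-everywhere zero. -/
/-!
Induct on `K`. Splitting a permutation `σ` of `Fin (K+1)` as `(σ 0, e)` with `e` a permutation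
of `Fin K` writes `∑_σ α_σ h_σ(t)` as `∑_j c_j(t₁, …, t_K) f_j(t₀)`, where each `c_j` is again a
combination of permutation products, built from `K` of the `f`'s. Since `α ≠ 0`, some `c_j` is a
nonzero such combination, so by induction it vanishes only on a null set; off that set, the zero
set in `t₀` is null by hypothesis, and Fubini–Tonelli makes the whole zero set null.
-/

open MeasureTheory Equiv

section Algebra

variable {X : Type*}

def permProd {ι : Type*} [Fintype ι] (f : ι → X → ℝ) (σ : Perm ι) (t : ι → X) : ℝ :=
  ∏ i, f (σ i) (t i)

theorem sum_mul_permProd_succ {n : ℕ} (f : Fin (n + 1) → X → ℝ) (α : Perm (Fin (n + 1)) → ℝ)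
    (t : Fin (n + 1) → X) :
    ∑ σ, α σ * permProd f σ t =
      ∑ j, (∑ e, α (Perm.decomposeFin.symm (j, e)) *
        permProd (fun k => f (swap 0 j k.succ)) e (Fin.tail t)) * f j (t 0) := by
  rw [← Perm.decomposeFin.symm.sum_comp, Fintype.sum_prod_type]
  refine Finset.sum_congr rfl fun j _ => ?_
  rw [Finset.sum_mul]
  refine Finset.sum_congr rfl fun e _ => ?_
  simp only [permProd, Fin.prod_univ_succ, Perm.decomposeFin_symm_apply_zero,
    Perm.decomposeFin_symm_apply_succ, Fin.tail]
  ring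

end Algebra

variable {X : Type*} [MeasurableSpace X]

theorem measurable_permProd {ι : Type*} [Fintype ι] {f : ι → X → ℝ}
    (hf : ∀ i, Measurable (f i)) (σ : Perm ι) : Measurable (permProd f σ) := by
  unfold permProd
  fun_prop

def HasNullZeroSets {ι : Type*} [Fintype ι] (μ : Measure X) (f : ι → X → ℝ) : Prop :=
  ∀ c : ι → ℝ, c ≠ 0 → μ {x | ∑ i, c i * f i x = 0} = 0

namespace HasNullZeroSets

variable {ι κ : Type*} [Fintype ι] [Fintype κ] {μ : Measure X} {f : ι → X → ℝ}

theorem comp_injective (hf : HasNullZeroSets μ f) {m : κ → ι} (hm : m.Injective) :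
    HasNullZeroSets μ (f ∘ m) := by
  intro c hc
  have hsum (x : X) : ∑ k, c k * f (m k) x = ∑ i, m.extend c 0 i * f i x :=
    Fintype.sum_of_injective m hm _ _
      (fun i hi => by rw [Function.extend_apply' _ _ _ hi, Pi.zero_apply, zero_mul])
      (fun k => by rw [hm.extend_apply])
  have hext : m.extend c 0 ≠ 0 := fun h =>
    hc (funext fun k => by simpa [hm.extend_apply] using congrFun h (m k))
  simpa only [Function.comp_apply, hsum] using hf _ hext

theorem linearIndependent [NeZero μ] (hf : HasNullZeroSets μ f) : LinearIndependent ℝ f := by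
  refine Fintype.linearIndependent_iff.2 fun c hc => ?_
  by_contra hne
  have hzero := hf c fun h => hne (congrFun h)
  have huniv : {x | ∑ i, c i * f i x = 0} = Set.univ := by
    ext x
    simpa using congrFun hc x
  exact NeZero.ne μ (Measure.measure_univ_eq_zero.1 (huniv ▸ hzero))

theorem prod_null {Y : Type*} [MeasurableSpace Y] {ν : Measure Y} [SFinite μ] [SFinite ν]
    (hf : HasNullZeroSets μ f) (hfm : ∀ i, Measurable (f i)) {c : ι → Y → ℝ}
    (hcm : ∀ i, Measurable (c i)) (hc : ∀ᵐ y ∂ν, (fun i => c i y) ≠ 0) :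
    μ.prod ν {p | ∑ i, c i p.2 * f i p.1 = 0} = 0 := by
  have hS : MeasurableSet {p : X × Y | ∑ i, c i p.2 * f i p.1 = 0} :=
    measurableSet_eq_fun (by fun_prop) measurable_const
  rw [← Measure.prod_swap, Measure.map_apply measurable_swap hS,
    Measure.measure_prod_null (hS.preimage measurable_swap)]
  filter_upwards [hc] with y hy using hf _ hy

theorem permProd_pi {μ : Measure X} [SigmaFinite μ] {K : ℕ} {f : Fin K → X → ℝ}
    (hf : HasNullZeroSets μ f) (hfm : ∀ k, Measurable (f k)) :
    HasNullZeroSets (Measure.pi fun _ : Fin K => μ) (permProd f) := by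
  induction K with
  | zero =>
    intro α hα
    have hα₁ : α 1 ≠ 0 := fun h => hα (funext fun σ => by rwa [Subsingleton.elim σ 1])
    simp [permProd, hα₁]
  | succ n ih =>
    intro α hα
    set c : Fin (n + 1) → (Fin n → X) → ℝ := fun j t' =>
      ∑ e, α (Perm.decomposeFin.symm (j, e)) * permProd (fun k => f (swap 0 j k.succ)) e t'
    have hcm (j : Fin (n + 1)) : Measurable (c j) := by
      have := fun e => measurable_permProd (fun k : Fin n => hfm (swap 0 j k.succ)) e
      fun_prop
    obtain ⟨⟨j, e⟩, hje⟩ : ∃ p, α (Perm.decomposeFin.symm p) ≠ 0 := by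
      by_contra! h
      exact hα (funext fun σ => by simpa using h (Perm.decomposeFin σ))
    have hcj : ∀ᵐ t' ∂(Measure.pi fun _ : Fin n => μ), c j t' ≠ 0 := by
      have hinj : (fun k : Fin n => swap 0 j k.succ).Injective :=
        (swap 0 j).injective.comp (Fin.succ_injective n)
      refine measure_eq_zero_iff_ae_notMem.1 (ih (hf.comp_injective hinj) (fun k => hfm _) _ ?_)
      exact fun h => hje (congrFun h e)
    have hpre : {t | ∑ σ, α σ * permProd f σ t = 0} =
        MeasurableEquiv.piFinSuccAbove (fun _ => X) 0 ⁻¹' {p | ∑ i, c i p.2 * f i p.1 = 0} := by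
      ext t
      simp only [Set.mem_ofPred_eq, Set.mem_preimage, sum_mul_permProd_succ]
      -- `piFinSuccAbove _ 0 t` unfolds to `(t 0, Fin.tail t)`
      rfl
    rw [hpre, (measurePreserving_piFinSuccAbove (fun _ => μ) 0).measure_preimage
      (measurableSet_eq_fun (by fun_prop) measurable_const).nullMeasurableSet]
    exact hf.prod_null hfm hcm (hcj.mono fun t' ht' h => ht' (congrFun h j))

end HasNullZeroSets

theorem perm_products_linearIndependent_general (K : ℕ)
    (f : Fin K → ℝ → ℝ)
    (hmeas : ∀ k, Measurable (f k))
    (hzero : ∀ c : Fin K → ℝ, c ≠ 0 →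
      volume {t : ℝ | ∑ k, c k * f k t = 0} = 0) :
    LinearIndependent ℝ
        (fun (σ : Equiv.Perm (Fin K)) (t : Fin K → ℝ) => ∏ k : Fin K, f (σ k) (t k)) ∧
      ∀ α : Equiv.Perm (Fin K) → ℝ, α ≠ 0 →
        volume {t : Fin K → ℝ |
          ∑ σ : Equiv.Perm (Fin K), α σ * ∏ k : Fin K, f (σ k) (t k) = 0} = 0 := by
  have h : HasNullZeroSets volume (permProd f) := HasNullZeroSets.permProd_pi hzero hmeas
  exact ⟨h.linearIndependent, h⟩

/-- **Lemma 2 (Measure zero), linear-independence form.**  If `f₀, …, f_{K-1}` are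
measurable, linearly independent functions whose nonzero linear combinations vanish
only on null sets, then the `K!` functions `h_σ(t) = ∏_k f_{σ(k)}(t_k)` on `ℝ^K`,
indexed by permutations `σ`, are linearly independent; indeed any nonzero linear
combination `∑_σ α_σ h_σ` vanishes only on a Lebesgue-null subset of `ℝ^K`. -/
theorem perm_products_linearIndependent (K : ℕ) (hK : 1 ≤ K)
    (f : Fin K → ℝ → ℝ)
    (hmeas : ∀ k, Measurable (f k))
    (hli : LinearIndependent ℝ f)
    (hzero : ∀ c : Fin K → ℝ, c ≠ 0 →
      volume {t : ℝ | ∑ k, c k * f k t = 0} = 0) :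
    LinearIndependent ℝ
        (fun (σ : Equiv.Perm (Fin K)) (t : Fin K → ℝ) => ∏ k : Fin K, f (σ k) (t k)) ∧
      ∀ α : Equiv.Perm (Fin K) → ℝ, α ≠ 0 →
        volume {t : Fin K → ℝ |
          ∑ σ : Equiv.Perm (Fin K), α σ * ∏ k : Fin K, f (σ k) (t k) = 0} = 0 :=
  perm_products_linearIndependent_general K f hmeas hzero
end
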